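/- If A ⊆ ℕ is a quasi-central set, then for every α > 0 and every 0 < γ < 1 the set g_{α,γ}(A) = {⌊nα + γ⌋ : n ∈ A} is a quasi-central set. -/

import Mathlib

open Set Filter Topology

attribute [local instance] Ultrafilter.add

/-- The nonhomogeneous spectrum function `g_{α,γ}(n) = ⌊nα + γ⌋`. -/
noncomputable def gFun (α γ : ℝ) (n : ℕ) : ℕ := (⌊(n : ℝ) * α + γ⌋).toNat

/-- The image `g_{α,γ}(A) = {⌊nα + γ⌋ : n ∈ A}` of a set `A ⊆ ℕ` under the spectrum map. -/
noncomputable def gImage (α γ : ℝ) (A : Set ℕ) : Set ℕ := gFun α γ '' A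

/-- A Furstenberg family: a nonempty collection of nonempty subsets of ℕ (the positive
integers), hereditary upwards. -/
def IsFurstenbergFamily (F : Set (Set ℕ)) : Prop :=
  F.Nonempty ∧ (∀ A ∈ F, A.Nonempty) ∧ ∀ A B : Set ℕ, A ∈ F → A ⊆ B → B ∈ F

/-- Translation `+` invariance of a family. -/
def TranslationInvariant (F : Set (Set ℕ)) : Prop :=
  ∀ n : ℕ, ∀ A ∈ F, (fun m => n + m) '' A ∈ F

/-- The Ramsey property of a family. -/
def HasRamseyProperty (F : Set (Set ℕ)) : Prop :=
  ∀ A B : Set ℕ, A ∪ B ∈ F → A ∈ F ∨ B ∈ F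

/-- `N((x,y), U×U) = {n ∈ ℕ : Tⁿx ∈ U and Tⁿy ∈ U}` (ℕ being the positive integers). -/
def retTimes2 {X : Type*} (T : X → X) (x y : X) (U : Set X) : Set ℕ :=
  {n : ℕ | 0 < n ∧ T^[n] x ∈ U ∧ T^[n] y ∈ U}

/-- `N(x, U) = {n ∈ ℕ : Tⁿx ∈ U}` (ℕ being the positive integers). -/
def retTimes1 {X : Type*} (T : X → X) (x : X) (U : Set X) : Set ℕ :=
  {n : ℕ | 0 < n ∧ T^[n] x ∈ U}

/-- `x` is `F`-strongly proximal to `y`: for every neighborhood `U` of `y`,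
`N((x,y),U×U) ∈ F`. -/
def StronglyProximal {X : Type*} [TopologicalSpace X] (F : Set (Set ℕ))
    (T : X → X) (x y : X) : Prop :=
  ∀ U ∈ nhds y, retTimes2 T x y U ∈ F

/-- `A` is an essential `F`-set: witnessed by a dynamical system (compact metric space with a
continuous self-map), a pair of points `x` `F`-strongly proximal to `y`, and a neighborhood
`U` of `y` with `N((x,y),U×U) ⊆ A`. -/
def IsEssentialSet (F : Set (Set ℕ)) (A : Set ℕ) : Prop :=
  ∃ (X : Type) (_ : MetricSpace X) (_ : CompactSpace X) (T : X → X),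
    Continuous T ∧ ∃ x y : X, StronglyProximal F T x y ∧
      ∃ U ∈ nhds y, retTimes2 T x y U ⊆ A

/-- The return-time set of the pair `((x,γ),(y,γ))` to the neighborhood `U × (γ-ε, γ+ε)`
in the suspension `(Y, F_{α⁻¹})`, expressed on the base:
`{n : F_{α⁻¹}ⁿ(x,γ) ∈ U × (γ-ε,γ+ε) and F_{α⁻¹}ⁿ(y,γ) ∈ U × (γ-ε,γ+ε)}`, where
`F_{α⁻¹}ⁿ(x,t) = (T^{⌊n/α+t⌋}x, n/α+t-⌊n/α+t⌋)`. -/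
noncomputable def suspRet {X : Type*} (T : X → X) (x y : X) (U : Set X)
    (α γ ε : ℝ) : Set ℕ :=
  {n : ℕ | 0 < n ∧ T^[(⌊(n : ℝ) / α + γ⌋).toNat] x ∈ U ∧
    T^[(⌊(n : ℝ) / α + γ⌋).toNat] y ∈ U ∧
    γ - ε < (n : ℝ) / α + γ - ⌊(n : ℝ) / α + γ⌋ ∧
    (n : ℝ) / α + γ - ⌊(n : ℝ) / α + γ⌋ < γ + ε}

/-- The pair `(x,y)` has the `F`-suspension-proximality property at level `γ` for the
suspension `(Y, F_{α⁻¹})` of `(X,T)`: for every neighborhood `U` of `y` and every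
`0 < ε < min{γ, 1-γ}`, the corresponding return-time set in the suspension belongs to `F`
(i.e. `(x,γ)` is `F`-strongly proximal to `(y,γ)` in `(Y, F_{α⁻¹})`). -/
def SuspensionProximal {X : Type*} [TopologicalSpace X] (F : Set (Set ℕ))
    (T : X → X) (x y : X) (α γ : ℝ) : Prop :=
  ∀ U ∈ nhds y, ∀ ε : ℝ, 0 < ε → ε < min γ (1 - γ) → suspRet T x y U α γ ε ∈ F

/-- `A ⊆ ℕ` is an IP-set. -/
def IsIPSet (A : Set ℕ) : Prop :=
  ∃ p : ℕ → ℕ, (∀ n, 0 < p n) ∧ ∀ s : Finset ℕ, s.Nonempty → ∑ n ∈ s, p n ∈ A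

/-- `A ⊆ ℕ` is an AP-set: it contains arbitrarily long arithmetic progressions. -/
def IsAPSet (A : Set ℕ) : Prop :=
  ∀ m : ℕ, ∃ a b : ℕ, 0 < a ∧ 0 < b ∧ ∀ k < m, a + k * b ∈ A

/-- `A ⊆ ℕ` is a J-set. -/
def IsJSet (A : Set ℕ) : Prop :=
  ∀ (m : ℕ) (p : Fin m → ℕ → ℕ), (∀ i n, 0 < p i n) →
    ∃ r : ℕ, 0 < r ∧ ∃ s : Finset ℕ, s.Nonempty ∧ ∀ i : Fin m, r + ∑ n ∈ s, p i n ∈ A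

/-- `A ⊆ ℕ` is piecewise syndetic: for some `ℓ`, the union `⋃_{i=0}^{ℓ} (A−i)` contains
arbitrarily long intervals of consecutive integers. -/
def IsPiecewiseSyndetic (A : Set ℕ) : Prop :=
  ∃ l : ℕ, ∀ m : ℕ, ∃ n : ℕ, 0 < n ∧ ∀ k, n ≤ k → k ≤ n + m → ∃ i ≤ l, k + i ∈ A

/-- The upper density `d*(A) = limsup_{n→∞} |A ∩ [1,n]| / n`. -/
noncomputable def upperDensity (A : Set ℕ) : ℝ :=
  Filter.limsup (fun n : ℕ => ((A ∩ Set.Icc 1 n).ncard : ℝ) / n) Filter.atTop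

/-- The upper Banach density
`BD*(A) = limsup_{(n−m)→∞} |A ∩ [m,n]| / (n−m+1) = limsup_{L→∞} sup_m |A ∩ [m,m+L]| / (L+1)`. -/
noncomputable def upperBanachDensity (A : Set ℕ) : ℝ :=
  Filter.limsup (fun L : ℕ =>
    ⨆ m : ℕ, ((A ∩ Set.Icc m (m + L)).ncard : ℝ) / (L + 1)) Filter.atTop

/-- `A ⊆ ℕ` is a C-set: a member of an idempotent ultrafilter all of whose members are
J-sets. -/
def IsCSet (A : Set ℕ) : Prop :=
  ∃ p : Ultrafilter ℕ, p + p = p ∧ (∀ B ∈ p, IsJSet B) ∧ A ∈ p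

/-- `A ⊆ ℕ` is a D-set: a member of an idempotent ultrafilter all of whose members have
positive upper Banach density. -/
def IsDSet (A : Set ℕ) : Prop :=
  ∃ p : Ultrafilter ℕ, p + p = p ∧ (∀ B ∈ p, 0 < upperBanachDensity B) ∧ A ∈ p

/-- `A ⊆ ℕ` is a quasi-central set: a member of an idempotent ultrafilter all of whose
members are piecewise syndetic. -/
def IsQuasiCentralSet (A : Set ℕ) : Prop :=
  ∃ p : Ultrafilter ℕ, p + p = p ∧ (∀ B ∈ p, IsPiecewiseSyndetic B) ∧ A ∈ p

/-- The dual family `ess*(F)` of the family of essential `F`-sets. -/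
def essDual (F : Set (Set ℕ)) : Set (Set ℕ) :=
  {B : Set ℕ | ∀ A : Set ℕ, IsEssentialSet F A → (B ∩ A).Nonempty}

/-! Take the image `g(p)` of an idempotent ultrafilter `p` witnessing that `A` is quasi-central.
Since `n ↦ nα` is additive into the compact group `ℝ/ℤ`, the limit of `nα mod 1` along `p` is
an idempotent of `ℝ/ℤ`, hence `0`: for `p`-almost all `n`, `nα` lies within
`min γ (1 - γ) / 2` of an integer, and on such `n` the map `g` is additive. Hence `g(p)` is
idempotent. Every member of `g(p)` contains the image under `g` of a member of `p`, and `g`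
preserves piecewise syndeticity because it is monotone, has bounded increments and grows
uniformly. -/

namespace Ultrafilter

theorem tendsto_add {M G F : Type*} [Add M] [Add G] [TopologicalSpace G] [ContinuousAdd G]
    [FunLike F M G] [AddHomClass F M G] (f : F) {p q : Ultrafilter M} {x y : G}
    (hp : Tendsto f p (𝓝 x)) (hq : Tendsto f q (𝓝 y)) :
    Tendsto f ↑(p + q) (𝓝 (x + y)) := fun W hW => by
  have hsum : Tendsto (fun z : G × G => z.1 + z.2) (𝓝 x ×ˢ 𝓝 y) (𝓝 (x + y)) := by
    simpa only [← nhds_prod_eq] using _root_.tendsto_add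
  have hpair : ∀ᶠ mn in (p : Filter M) ×ˢ (q : Filter M), f mn.1 + f mn.2 ∈ W :=
    hsum.comp (hp.prodMap hq) hW
  exact (eventually_add p q (f · ∈ W)).2 (by simpa only [map_add] using hpair.curry)

theorem tendsto_zero_of_add_self {M G F : Type*} [Add M] [AddGroup G] [TopologicalSpace G]
    [ContinuousAdd G] [CompactSpace G] [T2Space G] [FunLike F M G] [AddHomClass F M G] (f : F)
    {p : Ultrafilter M} (hp : p + p = p) : Tendsto f p (𝓝 0) := by
  obtain ⟨x, -, hx⟩ := isCompact_univ.ultrafilter_le_nhds (p.map f) (by simp)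
  have hx : Tendsto f p (𝓝 x) := hx
  have hxx : Tendsto f p (𝓝 (x + x)) := by simpa only [hp] using tendsto_add f hx hx
  rwa [← left_eq_add.1 (tendsto_nhds_unique hx hxx)]

theorem map_add_map_self {M N : Type*} [Add M] [Add N] {p : Ultrafilter M} (hp : p + p = p)
    {f : M → N} (hf : ∀ᶠ m in (p : Filter M), ∀ᶠ n in (p : Filter M), f (m + n) = f m + f n) :
    p.map f + p.map f = p.map f := by
  refine coe_injective (Filter.ext fun B => ?_)
  calc B ∈ (↑(p.map f + p.map f) : Filter N)
      ↔ ∀ᶠ m in (p : Filter M), ∀ᶠ n in (p : Filter M), f m + f n ∈ B := Iff.rfl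
    _ ↔ ∀ᶠ m in (p : Filter M), ∀ᶠ n in (p : Filter M), f (m + n) ∈ B :=
      eventually_congr (hf.mono fun m hm => eventually_congr (hm.mono fun n hn => by rw [hn]))
    _ ↔ B ∈ (↑(p.map f) : Filter N) :=
      (eventually_add p p (f · ∈ B)).symm.trans (by rw [hp]; rfl)

theorem eventually_abs_sub_round_lt {p : Ultrafilter ℕ} (hp : p + p = p) (α : ℝ)
    {ε : ℝ} (hε : 0 < ε) : ∀ᶠ n : ℕ in p, |(n : ℝ) * α - round ((n : ℝ) * α)| < ε := by
  have h := Metric.tendsto_nhds.1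
    (p.tendsto_zero_of_add_self (multiplesHom UnitAddCircle (α : UnitAddCircle)) hp) ε hε
  filter_upwards [h] with n hn
  rwa [dist_zero_right, multiplesHom_apply, ← AddCircle.coe_nsmul, nsmul_eq_mul,
    UnitAddCircle.norm_eq] at hn

end Ultrafilter

theorem Int.floor_add_eq_of_abs_sub_lt {x γ : ℝ} {k : ℤ} (h : |x - k| < min γ (1 - γ)) :
    ⌊x + γ⌋ = k := by
  rw [abs_lt] at h
  rw [Int.floor_eq_iff]
  constructor <;> linarith [min_le_left γ (1 - γ), min_le_right γ (1 - γ)]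

theorem Nat.exists_le_lt_add_of_bounded_steps {f : ℕ → ℕ} {c : ℕ}
    (hstep : ∀ k, f (k + 1) ≤ f k + c) {n N K : ℕ} (hnN : n ≤ N) (hn : f n < K) (hN : K ≤ f N) :
    ∃ k, n < k ∧ k ≤ N ∧ K ≤ f k ∧ f k < K + c := by
  classical
  have hnN' : n < N := lt_of_le_of_ne hnN (by rintro rfl; omega)
  have hex : ∃ k, n < k ∧ K ≤ f k := ⟨N, hnN', hN⟩
  obtain ⟨hnk, hKk⟩ := Nat.find_spec hex
  have hprev : f (Nat.find hex - 1) < K := by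
    rcases (Nat.le_sub_one_of_lt hnk).eq_or_lt with h | h
    · rwa [← h]
    · exact lt_of_not_ge fun hK => Nat.find_min hex (by omega) ⟨h, hK⟩
  have := hstep (Nat.find hex - 1)
  rw [Nat.sub_add_cancel (by omega)] at this
  exact ⟨_, hnk, Nat.find_min' hex ⟨hnN', hN⟩, hKk, by omega⟩

theorem IsPiecewiseSyndetic.mono {A B : Set ℕ} (hA : IsPiecewiseSyndetic A) (hAB : A ⊆ B) :
    IsPiecewiseSyndetic B := by
  obtain ⟨l, hl⟩ := hA
  refine ⟨l, fun m => ?_⟩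
  obtain ⟨n, hn0, hn⟩ := hl m
  exact ⟨n, hn0, fun k hk1 hk2 => (hn k hk1 hk2).imp fun i hi => ⟨hi.1, hAB hi.2⟩⟩

theorem IsPiecewiseSyndetic.image {f : ℕ → ℕ} {c : ℕ} (hmono : Monotone f)
    (hstep : ∀ k i, f (k + i) ≤ f k + i * c) (hgrow : ∀ M, ∃ m, ∀ n, f n + M ≤ f (n + m))
    {A : Set ℕ} (hA : IsPiecewiseSyndetic A) : IsPiecewiseSyndetic (f '' A) := by
  obtain ⟨l, hl⟩ := hA
  refine ⟨(l + 1) * c, fun M => ?_⟩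
  obtain ⟨m, hm⟩ := hgrow (M + 1)
  obtain ⟨n, -, hn⟩ := hl m
  refine ⟨f n + 1, Nat.succ_pos _, fun K hK1 hK2 => ?_⟩
  obtain ⟨k, hnk, hkm, hKk, hkK⟩ := Nat.exists_le_lt_add_of_bounded_steps
    (fun k => by simpa using hstep k 1) (K := K) (Nat.le_add_right n m) (by omega)
    (by linarith [hm n])
  obtain ⟨i, hil, hiA⟩ := hn k hnk.le hkm
  have hup : f (k + i) ≤ f k + l * c := (hstep k i).trans (by gcongr)
  have hlow : f k ≤ f (k + i) := hmono (Nat.le_add_right k i)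
  refine ⟨f (k + i) - K, by rw [add_one_mul]; omega, k + i, hiA, by omega⟩

theorem gFun_eq_floor (α γ : ℝ) (n : ℕ) : gFun α γ n = ⌊(n : ℝ) * α + γ⌋₊ :=
  Int.floor_toNat _

section gFun

variable {α γ : ℝ}

theorem gFun_mono (hα : 0 ≤ α) : Monotone (gFun α γ) := fun m n hmn => by
  simp only [gFun_eq_floor]
  gcongr

theorem gFun_add_le (hα : 0 ≤ α) (hγ : 0 ≤ γ) (k i : ℕ) :
    gFun α γ (k + i) ≤ gFun α γ k + i * ⌈α⌉₊ := by
  simp only [gFun_eq_floor]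
  calc ⌊((k + i : ℕ) : ℝ) * α + γ⌋₊ ≤ ⌊(k * α + γ) + (i * ⌈α⌉₊ : ℕ)⌋₊ := by
        refine Nat.floor_le_floor ?_
        push_cast
        nlinarith [Nat.le_ceil α, (i.cast_nonneg : (0 : ℝ) ≤ i)]
    _ = _ := Nat.floor_add_natCast (by positivity) _

theorem le_gFun_add (hα : 0 < α) (hγ : 0 ≤ γ) (M n : ℕ) :
    gFun α γ n + M ≤ gFun α γ (n + ⌈M / α⌉₊) := by
  have hM : (M : ℝ) ≤ ⌈M / α⌉₊ * α := (div_le_iff₀ hα).1 (Nat.le_ceil _)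
  simp only [gFun_eq_floor]
  calc ⌊(n : ℝ) * α + γ⌋₊ + M = ⌊(n * α + γ) + (M : ℕ)⌋₊ :=
        (Nat.floor_add_natCast (by positivity) _).symm
    _ ≤ _ := by
        refine Nat.floor_le_floor ?_
        push_cast
        linarith

theorem gFun_cast_eq_of_abs_sub_lt (hα : 0 ≤ α) (hγ : 0 ≤ γ) {n : ℕ} {k : ℤ}
    (h : |n * α - k| < min γ (1 - γ)) : (gFun α γ n : ℤ) = k := by
  rw [gFun_eq_floor, Int.natCast_floor_eq_floor (by positivity)]
  exact Int.floor_add_eq_of_abs_sub_lt h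

theorem gFun_add_of_abs_sub_round_lt (hα : 0 ≤ α) (hγ : 0 ≤ γ) {m n : ℕ}
    (hm : |m * α - round (m * α)| < min γ (1 - γ) / 2)
    (hn : |n * α - round (n * α)| < min γ (1 - γ) / 2) :
    gFun α γ (m + n) = gFun α γ m + gFun α γ n := by
  have hmn : |((m + n : ℕ) : ℝ) * α - ↑(round (m * α) + round (n * α))| < min γ (1 - γ) := by
    calc _ = |(m * α - round (m * α)) + (n * α - round (n * α))| := by push_cast; ring_nf
      _ ≤ |m * α - round (m * α)| + |n * α - round (n * α)| := abs_add_le _ _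
      _ < min γ (1 - γ) := by linarith
  have hm' : |(m : ℝ) * α - round (m * α)| < min γ (1 - γ) := by
    linarith [abs_nonneg ((m : ℝ) * α - round (m * α))]
  have hn' : |(n : ℝ) * α - round (n * α)| < min γ (1 - γ) := by
    linarith [abs_nonneg ((n : ℝ) * α - round (n * α))]
  zify
  rw [gFun_cast_eq_of_abs_sub_lt hα hγ hmn, gFun_cast_eq_of_abs_sub_lt hα hγ hm',
    gFun_cast_eq_of_abs_sub_lt hα hγ hn']

end gFun

theorem isPiecewiseSyndetic_gImage {α γ : ℝ} (hα : 0 < α) (hγ : 0 ≤ γ) {A : Set ℕ}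
    (hA : IsPiecewiseSyndetic A) : IsPiecewiseSyndetic (gImage α γ A) :=
  hA.image (gFun_mono hα.le) (gFun_add_le hα.le hγ) fun M => ⟨_, le_gFun_add hα hγ M⟩

/-- If `A ⊆ ℕ` is a quasi-central set, then so is `g_{α,γ}(A)` for all `α > 0` and
`0 < γ < 1`. -/
theorem quasiCentral_spectra (A : Set ℕ) (hA : IsQuasiCentralSet A) (α γ : ℝ) (hα : 0 < α)
    (hγ0 : 0 < γ) (hγ1 : γ < 1) : IsQuasiCentralSet (gImage α γ A) := by
  obtain ⟨p, hp, hpws, hAp⟩ := hA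
  have hδ : 0 < min γ (1 - γ) / 2 := half_pos (lt_min hγ0 (sub_pos.2 hγ1))
  have hnear := p.eventually_abs_sub_round_lt hp α hδ
  refine ⟨p.map (gFun α γ), p.map_add_map_self hp ?_, fun B hB => ?_, ?_⟩
  · filter_upwards [hnear] with m hm
    filter_upwards [hnear] with n hn
    exact gFun_add_of_abs_sub_round_lt hα.le hγ0.le hm hn
  · exact (isPiecewiseSyndetic_gImage hα hγ0.le (hpws _ (Ultrafilter.mem_map.1 hB))).mono
      (image_preimage_subset _ _)
  · exact Ultrafilter.mem_map.2 (mem_of_superset hAp (subset_preimage_image _ _))
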